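/- arXiv:2402.10589 — 5 statements merged into one kernel-verified Lean document; each statement's English description precedes it below -/
import Mathlib

section
/- The series ∑_{n=0}^∞ (-1)^n (1/(6n+1) + 1/(6n+5)) converges to π/3. -/
/-!
Group the Leibniz series `∑ (-1)^m / (2m + 1) = π/4` in consecutive blocks of three terms.
The `n`-th block is `(-1)^n (1/(6n+1) + 1/(6n+5)) - (1/3) (-1)^n/(2n+1)`: its middle term is
a third of the `n`-th Leibniz term. Hence the partial sums of the series are
`L(3N) + L(N)/3`, where `L` denotes the Leibniz partial sums, and they tend to
`π/4 + π/12 = π/3`.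
-/

open Filter Finset

theorem Finset.sum_range_mul_eq_sum_sum {M : Type*} [AddCommMonoid M] (f : ℕ → M) (k N : ℕ) :
    ∑ m ∈ range (k * N), f m = ∑ n ∈ range N, ∑ j ∈ range k, f (k * n + j) := by
  induction N with
  | zero => simp
  | succ N ih => rw [Nat.mul_succ, sum_range_add, ih, sum_range_succ]

lemma leibniz_block_of_three (n : ℕ) :
    ∑ j ∈ range 3, (-1 : ℝ) ^ (3 * n + j) / (2 * ((3 * n + j : ℕ) : ℝ) + 1) =
      (-1 : ℝ) ^ n * (1 / (6 * n + 1) + 1 / (6 * n + 5)) - 1 / 3 * ((-1) ^ n / (2 * n + 1)) := by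
  have hsign : (-1 : ℝ) ^ (3 * n) = (-1) ^ n := by
    rw [pow_mul]
    norm_num
  have h : (2 * (n : ℝ) + 1) ≠ 0 := by positivity
  simp only [sum_range_succ, sum_range_zero, pow_add, hsign]
  push_cast
  field_simp
  ring

theorem series_pi_div_three :
    Tendsto (fun N => ∑ n ∈ Finset.range N,
        (-1 : ℝ) ^ n * (1 / (6 * n + 1) + 1 / (6 * n + 5))) atTop
      (nhds (Real.pi / 3)) := by
  have hsplit : ∀ N : ℕ, ∑ n ∈ range N, (-1 : ℝ) ^ n * (1 / (6 * n + 1) + 1 / (6 * n + 5)) =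
      ∑ m ∈ range (3 * N), (-1 : ℝ) ^ m / (2 * m + 1) +
        1 / 3 * ∑ n ∈ range N, (-1 : ℝ) ^ n / (2 * n + 1) := by
    intro N
    simp only [sum_range_mul_eq_sum_sum, leibniz_block_of_three, sum_sub_distrib, mul_sum]
    ring
  have hleibniz := Real.tendsto_sum_pi_div_four
  have hlim := (hleibniz.comp (tendsto_id.const_mul_atTop' three_pos)).add
    (hleibniz.const_mul (1 / 3))
  rw [show Real.pi / 4 + 1 / 3 * (Real.pi / 4) = Real.pi / 3 by ring] at hlim
  exact hlim.congr fun N => (hsplit N).symm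
end

section
/- The integral from 0 to 1 of (1-x^6)(1-x^10)(1+x^12)/(1+x^30) dx equals 4π/15. -/
/-!
Over `ℝ`, `1 + x ^ 30` is the product of `1 + x ^ 2`, `x ^ 4 - x ^ 2 + 1` and
`(x - x ^ 3) ^ 2 + (x ^ 4 - x ^ 2 + 1) ^ 2`,
`(x + x ^ 3 - x ^ 5 - x ^ 7) ^ 2 + (x ^ 8 - x ^ 4 + 1) ^ 2`
(the cyclotomic factors of `1 + y ^ 15` at `y = x ^ 2`). Since `arctan (p / q)` has derivative
`(p' q - p q') / (p ^ 2 + q ^ 2)`, the partial fraction decomposition of the integrand is the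
derivative of a combination of `arctan x`, `arctan (x ^ 3)` and two such `arctan (p / q)`.
At `x = 1` both `p` vanish, leaving `(4 / 5 + 4 / 15) (π / 4) = 4 π / 15`.
-/

open Real

theorem hasDerivAt_arctan_div {p q : ℝ → ℝ} {p' q' x : ℝ} (hp : HasDerivAt p p' x)
    (hq : HasDerivAt q q' x) (hqx : q x ≠ 0) :
    HasDerivAt (fun y => arctan (p y / q y)) ((p' * q x - p x * q') / (p x ^ 2 + q x ^ 2)) x := by
  refine (hp.div hq hqx).arctan.congr_deriv ?_
  have : p x ^ 2 + q x ^ 2 ≠ 0 := by positivity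
  rw [Pi.div_apply]
  field_simp
  ring

theorem sq_sub_self_add_one_pos (y : ℝ) : 0 < y ^ 2 - y + 1 := by
  nlinarith [sq_nonneg (y - 1 / 2)]

noncomputable def integralThreeAntideriv (x : ℝ) : ℝ :=
  4 / 5 * arctan x + 4 / 15 * arctan (x ^ 3)
    + 2 / 15 * arctan ((x - x ^ 3) / (x ^ 4 - x ^ 2 + 1))
    + 1 / 15 * arctan ((x + x ^ 3 - x ^ 5 - x ^ 7) / (x ^ 8 - x ^ 4 + 1))

theorem integrand_partial_fractions (x : ℝ) :
    (1 - x ^ 6) * (1 - x ^ 10) * (1 + x ^ 12) / (1 + x ^ 30)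
      = 4 / 5 * (1 / (1 + x ^ 2)) + 4 / 15 * (3 * x ^ 2 / (1 + x ^ 6))
        + 2 / 15 * ((1 - 2 * x ^ 2 - 2 * x ^ 4 + x ^ 6) / (x ^ 8 - x ^ 6 + x ^ 4 - x ^ 2 + 1))
        + 1 / 15 * ((1 + 3 * x ^ 2 - 2 * x ^ 4 - 6 * x ^ 6 - 6 * x ^ 8 - 2 * x ^ 10 + 3 * x ^ 12
            + x ^ 14) / (x ^ 16 + x ^ 14 - x ^ 10 - x ^ 8 - x ^ 6 + x ^ 2 + 1)) := by
  have hb : 0 < x ^ 4 - x ^ 2 + 1 := by linarith [sq_sub_self_add_one_pos (x ^ 2)]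
  have hb' : 0 < x ^ 8 - x ^ 4 + 1 := by linarith [sq_sub_self_add_one_pos (x ^ 4)]
  have hc : 0 < x ^ 8 - x ^ 6 + x ^ 4 - x ^ 2 + 1 := by
    linarith [sq_nonneg (x - x ^ 3), pow_pos hb 2]
  have hd : 0 < x ^ 16 + x ^ 14 - x ^ 10 - x ^ 8 - x ^ 6 + x ^ 2 + 1 := by
    linarith [sq_nonneg (x + x ^ 3 - x ^ 5 - x ^ 7), pow_pos hb' 2]
  have ha : 0 < 1 + x ^ 2 := by positivity
  rw [show 1 + x ^ 6 = (1 + x ^ 2) * (x ^ 4 - x ^ 2 + 1) by ring,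
    show 1 + x ^ 30 = (1 + x ^ 2) * (x ^ 4 - x ^ 2 + 1) * (x ^ 8 - x ^ 6 + x ^ 4 - x ^ 2 + 1)
      * (x ^ 16 + x ^ 14 - x ^ 10 - x ^ 8 - x ^ 6 + x ^ 2 + 1) by ring]
  -- named, so that `field_simp` keeps the factors intact instead of expanding them
  set a := 1 + x ^ 2
  set b := x ^ 4 - x ^ 2 + 1
  set c := x ^ 8 - x ^ 6 + x ^ 4 - x ^ 2 + 1
  set d := x ^ 16 + x ^ 14 - x ^ 10 - x ^ 8 - x ^ 6 + x ^ 2 + 1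
  field_simp
  simp only [a, b, c, d]
  ring

theorem hasDerivAt_integralThreeAntideriv (x : ℝ) :
    HasDerivAt integralThreeAntideriv
      ((1 - x ^ 6) * (1 - x ^ 10) * (1 + x ^ 12) / (1 + x ^ 30)) x := by
  have hq₁ : 0 < x ^ 4 - x ^ 2 + 1 := by linarith [sq_sub_self_add_one_pos (x ^ 2)]
  have hq₂ : 0 < x ^ 8 - x ^ 4 + 1 := by linarith [sq_sub_self_add_one_pos (x ^ 4)]
  have hp₁ : HasDerivAt (fun y => y - y ^ 3) (1 - 3 * x ^ 2) x :=
    ((hasDerivAt_id' x).sub (hasDerivAt_pow 3 x)).congr_deriv (by norm_num)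
  have hq₁' : HasDerivAt (fun y => y ^ 4 - y ^ 2 + 1) (4 * x ^ 3 - 2 * x) x := by
    simpa using ((hasDerivAt_pow 4 x).sub (hasDerivAt_pow 2 x)).add_const 1
  have hp₂ : HasDerivAt (fun y => y + y ^ 3 - y ^ 5 - y ^ 7)
      (1 + 3 * x ^ 2 - 5 * x ^ 4 - 7 * x ^ 6) x :=
    ((((hasDerivAt_id' x).add (hasDerivAt_pow 3 x)).sub (hasDerivAt_pow 5 x)).sub
      (hasDerivAt_pow 7 x)).congr_deriv (by norm_num)
  have hq₂' : HasDerivAt (fun y => y ^ 8 - y ^ 4 + 1) (8 * x ^ 7 - 4 * x ^ 3) x := by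
    simpa using ((hasDerivAt_pow 8 x).sub (hasDerivAt_pow 4 x)).add_const 1
  rw [integrand_partial_fractions]
  refine ((((((hasDerivAt_id' x).arctan.congr_deriv ?_).const_mul (4 / 5)).add
    (((hasDerivAt_pow 3 x).arctan.congr_deriv ?_).const_mul (4 / 15))).add
    (((hasDerivAt_arctan_div hp₁ hq₁' hq₁.ne').congr_deriv ?_).const_mul (2 / 15))).add
    (((hasDerivAt_arctan_div hp₂ hq₂' hq₂.ne').congr_deriv ?_).const_mul (1 / 15)))
  · exact mul_one _
  · push_cast; ring
  all_goals congr 1 <;> ring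

theorem integralThreeAntideriv_zero : integralThreeAntideriv 0 = 0 := by
  simp [integralThreeAntideriv]

theorem integralThreeAntideriv_one : integralThreeAntideriv 1 = 4 * π / 15 := by
  norm_num [integralThreeAntideriv, arctan_one]
  ring

theorem integral_three :
    (∫ x in (0:ℝ)..1, (1 - x ^ 6) * (1 - x ^ 10) * (1 + x ^ 12) / (1 + x ^ 30))
      = 4 * Real.pi / 15 := by
  have hcont : Continuous
      fun x : ℝ => (1 - x ^ 6) * (1 - x ^ 10) * (1 + x ^ 12) / (1 + x ^ 30) := by
    fun_prop (disch := intro x; positivity)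
  rw [intervalIntegral.integral_eq_sub_of_hasDerivAt
    (fun x _ => hasDerivAt_integralThreeAntideriv x) (hcont.intervalIntegrable 0 1),
    integralThreeAntideriv_one, integralThreeAntideriv_zero, sub_zero]
end

section
/- The series ∑_{n=0}^∞ (-1)^n (1/(30n+1) - 1/(30n+7) - 1/(30n+11) + 1/(30n+13) + 1/(30n+17) - 1/(30n+19) - 1/(30n+23) + 1/(30n+29)) converges to 4π/15. -/
/-!
Writing `2m + 1 = 30n + r`, the Leibniz sign `(-1)^m` equals `(-1)^n (-1)^((r-1)/2)`, so the
series is the Leibniz series `∑ (-1)^m / (2m+1)` restricted to `2m + 1` coprime to `15`. The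
Leibniz terms with `d ∣ 2m + 1` (`d` odd) are `(-1)^((d-1)/2) / d` times the full Leibniz series,
so inclusion–exclusion over the divisors `3, 5` of `15` gives
`(1 + 1/3 - 1/5 - 1/15) · π/4 = 4π/15`. On partial sums this is exact after `N` blocks of `15`
consecutive Leibniz terms.
-/

open Filter Finset Topology

noncomputable def leibnizPartialSum (N : ℕ) : ℝ := ∑ i ∈ range N, (-1) ^ i / (2 * i + 1)

/-- The `c` Leibniz terms of index `c x, …, c x + c - 1`, without the sign `(-1)^(c x)`. -/
noncomputable def leibnizBlock (c : ℕ) (x : ℝ) : ℝ :=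
  ∑ j ∈ range c, (-1) ^ j / (2 * (c * x + j) + 1)

lemma tendsto_leibnizPartialSum : Tendsto leibnizPartialSum atTop (𝓝 (Real.pi / 4)) :=
  Real.tendsto_sum_pi_div_four

lemma tendsto_leibnizPartialSum_comp_mul {c : ℕ} (hc : 0 < c) :
    Tendsto (fun N => leibnizPartialSum (c * N)) atTop (𝓝 (Real.pi / 4)) :=
  tendsto_leibnizPartialSum.comp (tendsto_id.const_mul_atTop' hc)

lemma leibnizPartialSum_mul_succ (c N : ℕ) :
    leibnizPartialSum (c * (N + 1)) =
      leibnizPartialSum (c * N) + (-1) ^ (c * N) * leibnizBlock c N := by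
  rw [leibnizPartialSum, leibnizPartialSum, leibnizBlock, mul_add_one, sum_range_add, mul_sum]
  congr 1
  refine sum_congr rfl fun j _ => ?_
  push_cast
  ring

lemma leibnizPartialSum_odd_mul_succ {c : ℕ} (hc : Odd c) (N : ℕ) :
    leibnizPartialSum (c * (N + 1)) = leibnizPartialSum (c * N) + (-1) ^ N * leibnizBlock c N := by
  rw [leibnizPartialSum_mul_succ, pow_mul, hc.neg_one_pow]

lemma summand_eq_leibnizBlock (x : ℝ) :
    1 / (30 * x + 1) - 1 / (30 * x + 7) - 1 / (30 * x + 11) + 1 / (30 * x + 13)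
      + 1 / (30 * x + 17) - 1 / (30 * x + 19) - 1 / (30 * x + 23) + 1 / (30 * x + 29)
      = leibnizBlock 15 x + 1 / 3 * leibnizBlock 5 x - 1 / 5 * leibnizBlock 3 x
        - 1 / 15 * leibnizBlock 1 x := by
  simp only [leibnizBlock, mul_sum, one_div_mul_eq_div, div_div]
  simp only [sum_range_succ, sum_range_zero]
  ring_nf

lemma sum_range_eq_leibnizPartialSum (N : ℕ) :
    ∑ n ∈ range N, (-1 : ℝ) ^ n * (1 / (30 * n + 1) - 1 / (30 * n + 7) - 1 / (30 * n + 11)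
        + 1 / (30 * n + 13) + 1 / (30 * n + 17) - 1 / (30 * n + 19)
        - 1 / (30 * n + 23) + 1 / (30 * n + 29))
      = leibnizPartialSum (15 * N) + 1 / 3 * leibnizPartialSum (5 * N)
        - 1 / 5 * leibnizPartialSum (3 * N) - 1 / 15 * leibnizPartialSum (1 * N) := by
  induction N with
  | zero => simp [leibnizPartialSum]
  | succ N ih =>
    rw [sum_range_succ, ih, summand_eq_leibnizBlock]
    simp only [leibnizPartialSum_odd_mul_succ (by decide : Odd 15),
      leibnizPartialSum_odd_mul_succ (by decide : Odd 5),
      leibnizPartialSum_odd_mul_succ (by decide : Odd 3),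
      leibnizPartialSum_odd_mul_succ (by decide : Odd 1)]
    ring

theorem series_four_pi_div_fifteen :
    Tendsto (fun N => ∑ n ∈ Finset.range N,
        (-1 : ℝ) ^ n * (1 / (30 * n + 1) - 1 / (30 * n + 7) - 1 / (30 * n + 11)
          + 1 / (30 * n + 13) + 1 / (30 * n + 17) - 1 / (30 * n + 19)
          - 1 / (30 * n + 23) + 1 / (30 * n + 29))) atTop
      (nhds (4 * Real.pi / 15)) := by
  simp only [sum_range_eq_leibnizPartialSum]
  have h := (((tendsto_leibnizPartialSum_comp_mul (c := 15) (by norm_num)).add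
    ((tendsto_leibnizPartialSum_comp_mul (c := 5) (by norm_num)).const_mul (1 / 3))).sub
    ((tendsto_leibnizPartialSum_comp_mul (c := 3) (by norm_num)).const_mul (1 / 5))).sub
    ((tendsto_leibnizPartialSum_comp_mul (c := 1) (by norm_num)).const_mul (1 / 15))
  convert h using 2
  ring
end

section
/- The integral from 0 to 1 of (1+x^6)(1-x^10)(1+x^12)/(1-x^30) dx equals √3·π/5. -/
/-!
Writing `g t = (1 + t²) / (1 + t² + t⁴) = (1 - t⁴) / (1 - t⁶)`, the integrand equals
`g x + x⁴ g (x⁵)` on `[0, 1)`, since `(1 - x⁴) / (1 - x⁶) + (x⁴ - x²⁴) / (1 - x³⁰)` has numerator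
`(1 + x⁶) (1 - x¹⁰) (1 + x¹²)` over `1 - x³⁰`. The substitution `t = x⁵` turns the second term
into `g / 5`, so the integral is `6/5 ∫₀¹ g`. Finally `g` is the mean of `1 / (t² + t + 1)` and
`1 / (t² - t + 1)`, and the arctangent gives `∫₀¹ g = √3 π / 6`.
-/

open Real intervalIntegral

theorem integral_one_div_add_sq_add_sq (b : ℝ) {a : ℝ} (ha : a ≠ 0) (u v : ℝ) :
    ∫ t in u..v, 1 / ((t + b) ^ 2 + a ^ 2) = (arctan ((v + b) / a) - arctan ((u + b) / a)) / a := by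
  have hderiv (t : ℝ) :
      HasDerivAt (fun t => arctan ((t + b) / a) / a) (1 / ((t + b) ^ 2 + a ^ 2)) t := by
    refine ((((hasDerivAt_id t).add_const b).div_const a).arctan.div_const a).congr_deriv ?_
    simp only [id]
    field_simp
    ring
  have hcont : Continuous fun t : ℝ => 1 / ((t + b) ^ 2 + a ^ 2) :=
    continuous_const.div (by fun_prop) fun t => by positivity
  rw [integral_eq_sub_of_hasDerivAt (fun t _ => hderiv t) (hcont.intervalIntegrable u v)]
  ring

theorem integral_pow_mul_comp_pow {g : ℝ → ℝ} (hg : Continuous g) (n : ℕ) (a b : ℝ) :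
    ∫ x in a..b, x ^ n * g (x ^ (n + 1)) = (∫ u in a ^ (n + 1)..b ^ (n + 1), g u) / (n + 1) := by
  have hsubst := integral_comp_mul_deriv (f := fun x => x ^ (n + 1))
    (f' := fun x => (n + 1) * x ^ n) (g := g) (a := a) (b := b)
    (fun x _ => by simpa using hasDerivAt_pow (n + 1) x) (by fun_prop) hg
  rw [← hsubst, eq_div_iff (by positivity), ← integral_mul_const]
  congr 1
  ext x
  simp only [Function.comp_apply]
  ring

theorem continuous_one_add_sq_div_one_add_sq_add_pow_four :
    Continuous fun t : ℝ => (1 + t ^ 2) / (1 + t ^ 2 + t ^ 4) :=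
  by fun_prop (disch := intro t; positivity)

theorem integral_one_add_sq_div_one_add_sq_add_pow_four :
    ∫ t in (0:ℝ)..1, (1 + t ^ 2) / (1 + t ^ 2 + t ^ 4) = √3 * π / 6 := by
  have h3 : √3 ^ 2 = 3 := sq_sqrt (by norm_num)
  have hsplit (t : ℝ) : (1 + t ^ 2) / (1 + t ^ 2 + t ^ 4) =
      (1 / ((t + 1 / 2) ^ 2 + (√3 / 2) ^ 2) + 1 / ((t + -1 / 2) ^ 2 + (√3 / 2) ^ 2)) / 2 := by
    rw [div_pow, h3]
    have : 0 < t ^ 2 + t + 1 := by nlinarith [sq_nonneg (t + 1 / 2)]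
    have : 0 < t ^ 2 - t + 1 := by nlinarith [sq_nonneg (t - 1 / 2)]
    field_simp
    ring
  have hcont (b : ℝ) : Continuous fun t : ℝ => 1 / ((t + b) ^ 2 + (√3 / 2) ^ 2) :=
    continuous_const.div (by fun_prop) fun t => by positivity
  have ha : √3 / 2 ≠ 0 := by positivity
  have e1 : (1 + 1 / 2) / (√3 / 2) = √3 := by field_simp; linarith
  have e2 : (0 + 1 / 2) / (√3 / 2) = (√3)⁻¹ := by field_simp; norm_num
  have e3 : (1 + -1 / 2) / (√3 / 2) = (√3)⁻¹ := by field_simp; norm_num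
  have e4 : (0 + -1 / 2) / (√3 / 2) = -(√3)⁻¹ := by field_simp; norm_num
  simp_rw [hsplit]
  rw [integral_div,
    integral_add ((hcont _).intervalIntegrable 0 1) ((hcont _).intervalIntegrable 0 1),
    integral_one_div_add_sq_add_sq _ ha, integral_one_div_add_sq_add_sq _ ha, e1, e2, e3, e4,
    arctan_neg, arctan_sqrt_three, arctan_inv_sqrt_three]
  field_simp
  linear_combination (-3) * h3

theorem one_add_pow_six_mul_one_sub_pow_ten_mul_one_add_pow_twelve_div {x : ℝ} (hx : x ^ 30 ≠ 1) :
    (1 + x ^ 6) * (1 - x ^ 10) * (1 + x ^ 12) / (1 - x ^ 30) =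
      (1 + x ^ 2) / (1 + x ^ 2 + x ^ 4) +
        x ^ 4 * ((1 + (x ^ 5) ^ 2) / (1 + (x ^ 5) ^ 2 + (x ^ 5) ^ 4)) := by
  have : 1 - x ^ 30 ≠ 0 := sub_ne_zero.2 hx.symm
  field_simp
  ring

theorem integral_sqrt3_pi_div_five :
    (∫ x in (0:ℝ)..1, (1 + x ^ 6) * (1 - x ^ 10) * (1 + x ^ 12) / (1 - x ^ 30))
      = Real.sqrt 3 * Real.pi / 5 := by
  set g : ℝ → ℝ := fun t => (1 + t ^ 2) / (1 + t ^ 2 + t ^ 4)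
  have hg : Continuous g := continuous_one_add_sq_div_one_add_sq_add_pow_four
  have hsplit : (∫ x in (0:ℝ)..1, (1 + x ^ 6) * (1 - x ^ 10) * (1 + x ^ 12) / (1 - x ^ 30)) =
      ∫ x in (0:ℝ)..1, (g x + x ^ 4 * g (x ^ 5)) := by
    refine integral_congr_ae ?_
    filter_upwards [MeasureTheory.Measure.ae_ne MeasureTheory.volume 1] with x hx1 hx
    rw [Set.uIoc_of_le zero_le_one] at hx
    have hx30 : x ^ 30 < 1 := pow_lt_one₀ hx.1.le (lt_of_le_of_ne hx.2 hx1) (by norm_num)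
    exact one_add_pow_six_mul_one_sub_pow_ten_mul_one_add_pow_twelve_div hx30.ne
  have hint : IntervalIntegrable (fun x => x ^ 4 * g (x ^ 5)) MeasureTheory.volume 0 1 :=
    ((continuous_pow 4).mul (hg.comp (continuous_pow 5))).intervalIntegrable 0 1
  rw [hsplit, integral_add (hg.intervalIntegrable 0 1) hint, integral_pow_mul_comp_pow hg,
    one_pow, zero_pow (by norm_num), integral_one_add_sq_div_one_add_sq_add_pow_four]
  ring
end

section
/- The series ∑_{n=0}^∞ (-1)^n (1/(12n+1) - 1/(12n+5) - 1/(12n+7) + 1/(12n+11)) equals the integral from 0 to 1 of (1-x^4)(1-x^6)/(1+x^12) dx, which equals √2·π/6. -/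
/-!
Expanding `1 / (1 + x ^ 12)` as a geometric series and integrating term by term against
`(1 - x ^ 4) (1 - x ^ 6) = 1 - x ^ 4 - x ^ 6 + x ^ 10` over `[0, 1]` produces the series; the
remainder after `N` terms is `± ∫₀¹ x ^ (12 N) (1 - x ^ 4) (1 - x ^ 6) / (1 + x ^ 12)`, which
tends to `0` by dominated convergence.

For the value, `1 + x ^ 12 = (x ^ 4 + 1) (x ^ 4 - √3 x ^ 2 + 1) (x ^ 4 + √3 x ^ 2 + 1)` gives a
partial fraction decomposition into terms `(x ^ 2 + 1) / (x ^ 4 - c x ^ 2 + 1)` with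
`c ∈ {√3, 0, -√3}`. Writing `x ^ 4 - c x ^ 2 + 1 = ((x + a) ^ 2 + b ^ 2) ((x - a) ^ 2 + b ^ 2)`
with `a ^ 2 + b ^ 2 = 1`, such a term has antiderivative
`(arctan ((x + a) / b) + arctan ((x - a) / b)) / (2 b)`, so its integral over `[0, 1]` is
`π / (4 b) = π / (2 √(2 - c))`.
-/

open Filter Real Topology Finset MeasureTheory

theorem tendsto_intervalIntegral_pow_mul_zero {g : ℝ → ℝ}
    (hg : IntervalIntegrable g volume 0 1) :
    Tendsto (fun m : ℕ => ∫ x in (0:ℝ)..1, x ^ m * g x) atTop (𝓝 0) := by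
  have hlim := intervalIntegral.tendsto_integral_filter_of_dominated_convergence
    (l := atTop) (F := fun (m : ℕ) (x : ℝ) => x ^ m * g x) (f := fun _ => 0) (fun x => ‖g x‖)
    ?_ ?_ hg.norm ?_
  · simpa using hlim
  · exact .of_forall fun m =>
      (continuous_pow m).aestronglyMeasurable.mul hg.def'.aestronglyMeasurable
  · refine .of_forall fun m => .of_forall fun x hx => ?_
    rw [Set.uIoc_of_le zero_le_one] at hx
    rw [norm_mul, norm_pow, Real.norm_of_nonneg hx.1.le]
    exact mul_le_of_le_one_left (norm_nonneg _) (pow_le_one₀ hx.1.le hx.2)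
  · filter_upwards [Measure.ae_ne volume 1] with x hx1 hx
    rw [Set.uIoc_of_le zero_le_one] at hx
    simpa using (tendsto_pow_atTop_nhds_zero_of_lt_one hx.1.le
      (lt_of_le_of_ne hx.2 hx1)).mul_const (g x)

theorem tendsto_sum_intervalIntegral_neg_pow_mul {g : ℝ → ℝ} {k : ℕ} (hk : 0 < k)
    (hg : IntervalIntegrable g volume 0 1) :
    Tendsto (fun N => ∑ n ∈ range N, ∫ x in (0:ℝ)..1, (-x ^ k) ^ n * g x) atTop
      (𝓝 (∫ x in (0:ℝ)..1, g x / (1 + x ^ k))) := by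
  set h := fun x : ℝ => g x / (1 + x ^ k)
  have hpos : ∀ x ∈ Set.uIcc (0:ℝ) 1, 0 < 1 + x ^ k := fun x hx => by
    rw [Set.uIcc_of_le zero_le_one] at hx
    have := pow_nonneg hx.1 k
    linarith
  have hh : IntervalIntegrable h volume 0 1 := by
    have hinv : ContinuousOn (fun x : ℝ => (1 + x ^ k)⁻¹) (Set.uIcc 0 1) :=
      (by fun_prop : Continuous fun x : ℝ => 1 + x ^ k).continuousOn.inv₀
        fun x hx => (hpos x hx).ne'
    simpa only [h, div_eq_mul_inv] using hg.mul_continuousOn hinv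
  have hsum (N : ℕ) : ∑ n ∈ range N, ∫ x in (0:ℝ)..1, (-x ^ k) ^ n * g x
      = (∫ x in (0:ℝ)..1, h x) - (-1) ^ N * ∫ x in (0:ℝ)..1, x ^ (k * N) * h x := by
    rw [← intervalIntegral.integral_finsetSum fun n _ =>
        hg.continuousOn_mul (by fun_prop : Continuous fun x : ℝ => (-x ^ k) ^ n).continuousOn,
      ← intervalIntegral.integral_const_mul,
      ← intervalIntegral.integral_sub hh ((hh.continuousOn_mul
        (by fun_prop : Continuous fun x : ℝ => x ^ (k * N)).continuousOn).const_mul _)]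
    refine intervalIntegral.integral_congr fun x hx => ?_
    have hgeom := geom_sum_mul_neg (-x ^ k) N
    simp only [h, ← Finset.sum_mul]
    field_simp [(hpos x hx).ne']
    rw [pow_mul, ← mul_pow, neg_one_mul]
    linear_combination g x * hgeom
  have hrem : Tendsto (fun N : ℕ => ∫ x in (0:ℝ)..1, x ^ (k * N) * h x) atTop (𝓝 0) :=
    (tendsto_intervalIntegral_pow_mul_zero hh).comp (tendsto_id.const_mul_atTop' hk)
  have hsigned : Tendsto (fun N : ℕ => (-1 : ℝ) ^ N * ∫ x in (0:ℝ)..1, x ^ (k * N) * h x)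
      atTop (𝓝 0) := by
    rw [tendsto_zero_iff_norm_tendsto_zero] at hrem ⊢
    simpa only [norm_mul, norm_pow, norm_neg, norm_one, one_pow, one_mul] using hrem
  simpa only [hsum, sub_zero] using tendsto_const_nhds.sub hsigned

theorem integral_neg_pow_twelve_mul_one_sub_pow_four_mul_one_sub_pow_six (n : ℕ) :
    ∫ x in (0:ℝ)..1, (-x ^ 12) ^ n * ((1 - x ^ 4) * (1 - x ^ 6))
      = (-1 : ℝ) ^ n * (1 / (12 * n + 1) - 1 / (12 * n + 5) - 1 / (12 * n + 7)
          + 1 / (12 * n + 11)) := by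
  have hexpand (x : ℝ) : (-x ^ 12) ^ n * ((1 - x ^ 4) * (1 - x ^ 6))
      = (-1) ^ n * (x ^ (12 * n) - x ^ (12 * n + 4) - x ^ (12 * n + 6) + x ^ (12 * n + 10)) := by
    rw [neg_pow, pow_mul]
    ring
  have hint (m : ℕ) : IntervalIntegrable (fun x : ℝ => x ^ m) volume 0 1 :=
    intervalIntegral.intervalIntegrable_pow m
  simp only [hexpand]
  rw [intervalIntegral.integral_const_mul,
    intervalIntegral.integral_add (((hint _).sub (hint _)).sub (hint _)) (hint _),
    intervalIntegral.integral_sub ((hint _).sub (hint _)) (hint _),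
    intervalIntegral.integral_sub (hint _) (hint _)]
  simp only [integral_pow]
  push_cast
  ring

theorem hasDerivAt_arctan_add_arctan (a : ℝ) {b : ℝ} (hb : b ≠ 0) (x : ℝ) :
    HasDerivAt (fun x => arctan ((x + a) / b) + arctan ((x - a) / b))
      (2 * b * (x ^ 2 + a ^ 2 + b ^ 2) / (((x + a) ^ 2 + b ^ 2) * ((x - a) ^ 2 + b ^ 2))) x := by
  have hplus := (((hasDerivAt_id' x).add_const a).div_const b).arctan
  have hminus := (((hasDerivAt_id' x).sub_const a).div_const b).arctan
  refine (hplus.add hminus).congr_deriv ?_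
  have : 0 < (x + a) ^ 2 + b ^ 2 := by positivity
  have : 0 < (x - a) ^ 2 + b ^ 2 := by positivity
  field_simp
  ring

theorem integral_sq_add_one_div_factored_quartic {a b : ℝ} (hb : 0 < b)
    (hab : a ^ 2 + b ^ 2 = 1) :
    ∫ x in (0:ℝ)..1, (x ^ 2 + 1) / (((x + a) ^ 2 + b ^ 2) * ((x - a) ^ 2 + b ^ 2))
      = π / (4 * b) := by
  have hderiv (x : ℝ) :
      HasDerivAt (fun x => (arctan ((x + a) / b) + arctan ((x - a) / b)) / (2 * b))
        ((x ^ 2 + 1) / (((x + a) ^ 2 + b ^ 2) * ((x - a) ^ 2 + b ^ 2))) x := by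
    refine ((hasDerivAt_arctan_add_arctan a hb.ne' x).div_const (2 * b)).congr_deriv ?_
    rw [add_assoc, hab]
    field_simp
  have hcont : Continuous fun x : ℝ =>
      (x ^ 2 + 1) / (((x + a) ^ 2 + b ^ 2) * ((x - a) ^ 2 + b ^ 2)) := by
    fun_prop (disch := intro x; positivity)
  rw [intervalIntegral.integral_eq_sub_of_hasDerivAt (fun x _ => hderiv x)
    (hcont.intervalIntegrable 0 1)]
  have hinv : (1 - a) / b = ((1 + a) / b)⁻¹ := by
    rw [inv_div, div_eq_div_iff hb.ne' (by nlinarith)]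
    linear_combination -hab
  have hpos : 0 < (1 + a) / b := div_pos (by nlinarith) hb
  simp only [zero_add, zero_sub, neg_div, arctan_neg, add_neg_cancel, zero_div, sub_zero, hinv,
    arctan_inv_of_pos hpos]
  field_simp
  ring

theorem integral_sq_add_one_div_quartic {c : ℝ} (hc₁ : -2 < c) (hc₂ : c < 2) :
    ∫ x in (0:ℝ)..1, (x ^ 2 + 1) / (x ^ 4 - c * x ^ 2 + 1) = π / (2 * √(2 - c)) := by
  have ha : √(2 + c) ^ 2 = 2 + c := sq_sqrt (by linarith)
  have hb : √(2 - c) ^ 2 = 2 - c := sq_sqrt (by linarith)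
  have hfactor (x : ℝ) : x ^ 4 - c * x ^ 2 + 1
      = ((x + √(2 + c) / 2) ^ 2 + (√(2 - c) / 2) ^ 2)
        * ((x - √(2 + c) / 2) ^ 2 + (√(2 - c) / 2) ^ 2) := by
    linear_combination (x ^ 2 / 2 - (4 + √(2 + c) ^ 2 + √(2 - c) ^ 2) / 16) * ha
      - (x ^ 2 / 2 + (4 + √(2 + c) ^ 2 + √(2 - c) ^ 2) / 16) * hb
  simp only [hfactor]
  rw [integral_sq_add_one_div_factored_quartic (by positivity)
    (by linear_combination ha / 4 + hb / 4)]
  ring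

theorem one_sub_pow_four_mul_one_sub_pow_six_div_one_add_pow_twelve (x : ℝ) :
    (1 - x ^ 4) * (1 - x ^ 6) / (1 + x ^ 12)
      = (1 - √3) / 6 * ((x ^ 2 + 1) / (x ^ 4 - √3 * x ^ 2 + 1))
        + 2 / 3 * ((x ^ 2 + 1) / (x ^ 4 + 1))
        + (1 + √3) / 6 * ((x ^ 2 + 1) / (x ^ 4 + √3 * x ^ 2 + 1)) := by
  have h3 : √3 ^ 2 = 3 := sq_sqrt (by norm_num)
  have hminus : x ^ 4 - √3 * x ^ 2 + 1 ≠ 0 := by nlinarith [sq_nonneg (x ^ 2 - √3 / 2)]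
  have hplus : x ^ 4 + √3 * x ^ 2 + 1 ≠ 0 := by positivity
  have h8 : x ^ 8 - x ^ 4 + 1 ≠ 0 := by nlinarith [sq_nonneg (x ^ 4 - 1 / 2)]
  have hprod : (x ^ 4 - √3 * x ^ 2 + 1) * (x ^ 4 + √3 * x ^ 2 + 1) = x ^ 8 - x ^ 4 + 1 := by
    linear_combination -x ^ 4 * h3
  have hsplit : (1 - √3) / 6 * ((x ^ 2 + 1) / (x ^ 4 - √3 * x ^ 2 + 1))
      + (1 + √3) / 6 * ((x ^ 2 + 1) / (x ^ 4 + √3 * x ^ 2 + 1))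
      = (x ^ 2 + 1) * (x ^ 4 - 3 * x ^ 2 + 1) / (3 * (x ^ 8 - x ^ 4 + 1)) := by
    rw [mul_div_assoc', mul_div_assoc', div_add_div _ _ hminus hplus, hprod,
      div_eq_div_iff h8 (mul_ne_zero (by norm_num) h8)]
    linear_combination -(x ^ 2 + x ^ 4) * (x ^ 8 - x ^ 4 + 1) * h3
  have hrat : (1 - x ^ 4) * (1 - x ^ 6) / (1 + x ^ 12)
      = 2 / 3 * ((x ^ 2 + 1) / (x ^ 4 + 1))
        + (x ^ 2 + 1) * (x ^ 4 - 3 * x ^ 2 + 1) / (3 * (x ^ 8 - x ^ 4 + 1)) := by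
    rw [mul_div_assoc', div_add_div _ _ (by positivity) (mul_ne_zero (by norm_num) h8),
      div_eq_div_iff (by positivity) (mul_ne_zero (by positivity) (mul_ne_zero (by norm_num) h8))]
    ring
  rw [hrat, ← hsplit]
  ring

theorem integral_one_sub_pow_four_mul_one_sub_pow_six_div_one_add_pow_twelve :
    ∫ x in (0:ℝ)..1, (1 - x ^ 4) * (1 - x ^ 6) / (1 + x ^ 12) = √2 * π / 6 := by
  have h3 : √3 < 2 := by rw [sqrt_lt' two_pos]; norm_num
  have h31 : 1 < √3 := by rw [lt_sqrt zero_le_one]; norm_num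
  have hminus : √2 * √(2 - √3) = √3 - 1 := by
    rw [← sqrt_mul zero_le_two, ← sqrt_sq (sub_nonneg.2 h31.le)]
    congr 1
    linear_combination -sq_sqrt (zero_le_three (α := ℝ))
  have hplus : √2 * √(2 + √3) = √3 + 1 := by
    rw [← sqrt_mul zero_le_two, ← sqrt_sq (by positivity : 0 ≤ √3 + 1)]
    congr 1
    linear_combination -sq_sqrt (zero_le_three (α := ℝ))
  have I₁ := integral_sq_add_one_div_quartic (by linarith) h3
  have I₂ : ∫ x in (0:ℝ)..1, (x ^ 2 + 1) / (x ^ 4 + 1) = π / (2 * √2) := by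
    simpa using integral_sq_add_one_div_quartic (c := 0) (by norm_num) (by norm_num)
  have I₃ : ∫ x in (0:ℝ)..1, (x ^ 2 + 1) / (x ^ 4 + √3 * x ^ 2 + 1)
      = π / (2 * √(2 + √3)) := by
    simpa using integral_sq_add_one_div_quartic (c := -√3) (by linarith) (by linarith)
  have hden (x : ℝ) : 0 < x ^ 4 - √3 * x ^ 2 + 1 := by
    nlinarith [sq_nonneg (x ^ 2 - √3 / 2), sq_sqrt (zero_le_three (α := ℝ))]
  simp only [one_sub_pow_four_mul_one_sub_pow_six_div_one_add_pow_twelve]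
  rw [intervalIntegral.integral_add, intervalIntegral.integral_add,
    intervalIntegral.integral_const_mul, intervalIntegral.integral_const_mul,
    intervalIntegral.integral_const_mul, I₁, I₂, I₃]
  · have : 0 < √(2 - √3) := sqrt_pos.2 (by linarith)
    rw [show 1 - √3 = -(√2 * √(2 - √3)) by rw [hminus]; ring,
      show 1 + √3 = √2 * √(2 + √3) by rw [hplus]; ring]
    field_simp
    rw [sq_sqrt zero_le_two]
    ring
  all_goals
    refine Continuous.intervalIntegrable ?_ 0 1
    fun_prop (disch := intro x; first | positivity | exact (hden x).ne')

theorem series_sqrt2_pi_div_six :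
    Tendsto (fun N => ∑ n ∈ Finset.range N,
        (-1 : ℝ) ^ n * (1 / (12 * n + 1) - 1 / (12 * n + 5) - 1 / (12 * n + 7)
          + 1 / (12 * n + 11))) atTop
      (nhds (∫ x in (0:ℝ)..1, (1 - x ^ 4) * (1 - x ^ 6) / (1 + x ^ 12))) ∧
    (∫ x in (0:ℝ)..1, (1 - x ^ 4) * (1 - x ^ 6) / (1 + x ^ 12))
      = Real.sqrt 2 * Real.pi / 6 := by
  refine ⟨?_, integral_one_sub_pow_four_mul_one_sub_pow_six_div_one_add_pow_twelve⟩
  have hg : IntervalIntegrable (fun x : ℝ => (1 - x ^ 4) * (1 - x ^ 6)) volume 0 1 :=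
    (by fun_prop : Continuous fun x : ℝ => (1 - x ^ 4) * (1 - x ^ 6)).intervalIntegrable 0 1
  simpa only [integral_neg_pow_twelve_mul_one_sub_pow_four_mul_one_sub_pow_six] using
    tendsto_sum_intervalIntegral_neg_pow_mul (by norm_num : 0 < 12) hg
end
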